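/- arXiv:1608.08408 — 2 statements merged into one kernel-verified Lean document; each statement's English description precedes it below -/
import Mathlib

section
/- For all real I > 0, α(I) = sinh(π/2)·I²/sinh(πI/2) satisfies α(I) ≤ 1.6. -/
lemma exp_lb (x : ℝ) (hx : 0 ≤ x) :
    1 + x + x^2/2 + x^3/6 + x^4/24 + x^5/120 ≤ Real.exp x := by
  have h := Real.sum_le_exp_of_nonneg hx 6
  simp [Finset.sum_range_succ, Nat.factorial] at h
  linarith

lemma exp_neg_ub (x : ℝ) (hx : 0 ≤ x) : Real.exp (-x) ≤ 1 - x + x^2/2 := by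
  have h3 : 1 + x + x^2/2 + x^3/6 ≤ Real.exp x := by
    nlinarith [exp_lb x hx, pow_nonneg hx 4, pow_nonneg hx 5]
  have hpos : (0:ℝ) < 1 + x + x^2/2 + x^3/6 := by nlinarith
  rw [Real.exp_neg, inv_le_iff_one_le_mul₀ (lt_of_lt_of_le hpos h3)]
  nlinarith [pow_nonneg hx 3, pow_nonneg hx 4, pow_nonneg hx 5]

lemma sinh_lb (x : ℝ) (hx : 0 ≤ x) :
    x + x^3/12 + x^4/48 + x^5/240 ≤ Real.sinh x := by
  rw [Real.sinh_eq]
  have h1 := exp_lb x hx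
  have h2 := exp_neg_ub x hx
  nlinarith

lemma exp_ub_786 : Real.exp 0.7854 ≤ 2.1954 := by
  have h := Real.exp_bound' (x := 0.7854) (by norm_num) (by norm_num) (n := 6) (by norm_num)
  simp [Finset.sum_range_succ, Nat.factorial] at h
  norm_num at h ⊢
  linarith

lemma sinh_pi_half : Real.sinh (Real.pi / 2) ≤ 2.41 := by
  have h1 : Real.exp (Real.pi / 2) ≤ 4.82 := by
    have hp : Real.pi / 2 ≤ 1.5708 := by
      have := Real.pi_lt_d2
      have := Real.pi_lt_d6
      linarith
    calc Real.exp (Real.pi / 2) ≤ Real.exp 1.5708 := Real.exp_le_exp.2 hp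
      _ = Real.exp 0.7854 * Real.exp 0.7854 := by
          rw [← Real.exp_add]; norm_num
      _ ≤ 2.1954 * 2.1954 := by
          have := exp_ub_786
          have := Real.exp_pos (0.7854:ℝ)
          nlinarith
      _ ≤ 4.82 := by norm_num
  have h2 : (0:ℝ) < Real.exp (-(Real.pi / 2)) := Real.exp_pos _
  rw [Real.sinh_eq]
  linarith

theorem alpha_upper_bound :
    ∀ I : ℝ, 0 < I →
      Real.sinh (Real.pi / 2) * I ^ 2 / Real.sinh (Real.pi * I / 2) ≤ 1.6 := by
  intro I hI
  have hpi := Real.pi_gt_d6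
  have hxpos : 0 < Real.pi * I / 2 := by positivity
  have hs : 0 < Real.sinh (Real.pi * I / 2) := Real.sinh_pos_iff.2 hxpos
  rw [div_le_iff₀ hs]
  have hmono : Real.sinh (1.570796 * I) ≤ Real.sinh (Real.pi * I / 2) := by
    apply Real.sinh_le_sinh.2
    nlinarith
  have hlb := sinh_lb (1.570796 * I) (by positivity)
  have hub := sinh_pi_half
  have hub2 : Real.sinh (Real.pi / 2) * I ^ 2 ≤ 2.41 * I ^ 2 := by
    nlinarith [sq_nonneg I]
  have key : (2.41:ℝ) * I ^ 2 ≤ 1.6 * (1.570796 * I + (1.570796 * I)^3/12 +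
      (1.570796 * I)^4/48 + (1.570796 * I)^5/240) := by
    nlinarith [sq_nonneg (I - 6/5), mul_pos hI hI, pow_pos hI 3, pow_pos hI 4, pow_pos hI 5,
      mul_nonneg (mul_nonneg hI.le hI.le) (sq_nonneg (I - 6/5)),
      mul_nonneg hI.le (sq_nonneg (I - 6/5)),
      mul_nonneg (mul_nonneg (mul_nonneg hI.le hI.le) hI.le) (sq_nonneg (I - 6/5))]
  nlinarith
end

section
/- Fix real constants A₀₀, A₁₀ ≠ 0, A₀₁ > 0 and a C¹ function ξ : ℝ → ℝ with ξ(0) = ξ(π) = 0 and |ξ(ψ)| < π/2 for all ψ. Define 𝔏(ψ) = A₀₀ + A₁₀·cos ψ + A₀₁·cos ξ(ψ). Then there exists exactly one ψ₀ ∈ (0, π) with 𝔏(ψ₀) = A₀₀ + A₀₁, provided additionally ξ(ψ) = −arcsin(c·sin ψ) for some constant c with |c| < 1. -/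
private lemma key_pos (A10 A01 c : ℝ) (hA10 : 0 < A10) (hA01 : 0 < A01) (hc : c^2 ≤ 1) :
    ∃! x : ℝ, x ∈ Set.Ioo (-1:ℝ) 1 ∧
      A10 * x + A01 * Real.sqrt (1 - c^2 + c^2 * x^2) = A01 := by
  set F : ℝ → ℝ := fun x => A10 * x + A01 * Real.sqrt (1 - c^2 + c^2 * x^2) with hF
  have hcont : ContinuousOn F (Set.Icc 0 1) := by
    apply Continuous.continuousOn
    fun_prop
  have hmono : StrictMonoOn F (Set.Icc (0:ℝ) 1) := by
    intro x hx y hy hxy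
    have h1 : Real.sqrt (1 - c^2 + c^2 * x^2) ≤ Real.sqrt (1 - c^2 + c^2 * y^2) :=
      Real.sqrt_le_sqrt (by nlinarith [hx.1, hy.1, sq_nonneg c,
        mul_le_mul_of_nonneg_left (by nlinarith [hx.1] : x^2 ≤ y^2) (sq_nonneg c)])
    simp only [hF]
    nlinarith [h1]
  have hF0 : F 0 ≤ A01 := by
    have hs : Real.sqrt (1 - c^2 + c^2 * 0^2) ≤ 1 := Real.sqrt_le_one.mpr (by nlinarith)
    simp only [hF]
    nlinarith
  have hF1 : F 1 = A10 + A01 := by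
    simp only [hF]
    rw [show (1:ℝ) - c^2 + c^2 * 1^2 = 1 by ring, Real.sqrt_one]; ring
  have hmem : A01 ∈ Set.Icc (F 0) (F 1) := ⟨hF0, by rw [hF1]; linarith⟩
  obtain ⟨x₀, hx₀mem, hx₀⟩ := intermediate_value_Icc (by norm_num : (0:ℝ) ≤ 1) hcont hmem
  have hx₀ne : x₀ ≠ 1 := by
    intro h; rw [h, hF1] at hx₀; linarith
  have hx₀lt : x₀ < 1 := lt_of_le_of_ne hx₀mem.2 hx₀ne
  refine ⟨x₀, ⟨⟨by linarith [hx₀mem.1], hx₀lt⟩, hx₀⟩, ?_⟩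
  rintro y ⟨hy, hyeq⟩
  have hy0 : 0 ≤ y := by
    by_contra h
    push_neg at h
    have hs : Real.sqrt (1 - c^2 + c^2 * y^2) ≤ 1 :=
      Real.sqrt_le_one.mpr (by
        nlinarith [mul_le_mul_of_nonneg_left
          (by nlinarith [hy.1, hy.2] : y^2 ≤ 1) (sq_nonneg c)])
    nlinarith [hyeq]
  exact hmono.injOn ⟨hy0, hy.2.le⟩ hx₀mem (by rw [hF]; exact hyeq.trans hx₀.symm)

private lemma key (A10 A01 c : ℝ) (hA10 : A10 ≠ 0) (hA01 : 0 < A01) (hc : c^2 ≤ 1) :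
    ∃! x : ℝ, x ∈ Set.Ioo (-1:ℝ) 1 ∧
      A10 * x + A01 * Real.sqrt (1 - c^2 + c^2 * x^2) = A01 := by
  rcases hA10.lt_or_gt with h | h
  · obtain ⟨x₀, ⟨hx₀, heq⟩, huniq⟩ := key_pos (-A10) A01 c (by linarith) hA01 hc
    refine ⟨-x₀, ⟨⟨by linarith [hx₀.2], by linarith [hx₀.1]⟩, ?_⟩, ?_⟩
    · rw [neg_sq]; linarith [heq]
    · rintro y ⟨hy, hyeq⟩
      have : -y = x₀ := huniq (-y)
        ⟨⟨by linarith [hy.2], by linarith [hy.1]⟩, by rw [neg_sq]; linarith [hyeq]⟩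
      linarith
  · exact key_pos A10 A01 c h hA01 hc

theorem highway_unique_point (A00 A10 A01 : ℝ) (hA10 : A10 ≠ 0) (hA01 : 0 < A01)
    (ξ : ℝ → ℝ) (hC1 : ContDiff ℝ 1 ξ)
    (h0 : ξ 0 = 0) (hπ : ξ Real.pi = 0)
    (hbound : ∀ ψ : ℝ, |ξ ψ| < Real.pi / 2)
    (c : ℝ) (hc : |c| < 1)
    (hξ : ∀ ψ : ℝ, ξ ψ = -Real.arcsin (c * Real.sin ψ)) :
    ∃! ψ₀ : ℝ, ψ₀ ∈ Set.Ioo 0 Real.pi ∧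
      A00 + A10 * Real.cos ψ₀ + A01 * Real.cos (ξ ψ₀) = A00 + A01 := by
  obtain ⟨hc1, hc2⟩ := abs_lt.mp hc
  have hc2' : c^2 ≤ 1 := by nlinarith
  have hcos : ∀ ψ : ℝ, Real.cos (ξ ψ) =
      Real.sqrt (1 - c^2 + c^2 * (Real.cos ψ)^2) := by
    intro ψ
    rw [hξ ψ, Real.cos_neg, Real.cos_arcsin]
    congr 1
    have := Real.sin_sq_add_cos_sq ψ
    nlinarith [this]
  obtain ⟨x₀, ⟨hx₀, heq⟩, huniq⟩ := key A10 A01 c hA10 hA01 hc2'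
  refine ⟨Real.arccos x₀,
    ⟨⟨Real.arccos_pos.mpr hx₀.2, lt_of_le_of_ne (Real.arccos_le_pi x₀)
        (fun h => by have := Real.arccos_eq_pi.mp h; linarith [hx₀.1])⟩, ?_⟩, ?_⟩
  · rw [hcos, Real.cos_arccos hx₀.1.le hx₀.2.le]
    linarith
  · rintro ψ ⟨hψ, hψeq⟩
    have hmem0 : (0:ℝ) ∈ Set.Icc 0 Real.pi := ⟨le_refl _, Real.pi_nonneg⟩
    have hmemπ : Real.pi ∈ Set.Icc 0 Real.pi := ⟨Real.pi_nonneg, le_refl _⟩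
    have hmemψ : ψ ∈ Set.Icc 0 Real.pi := ⟨hψ.1.le, hψ.2.le⟩
    have h1 : Real.cos ψ < 1 := by
      have := Real.strictAntiOn_cos hmem0 hmemψ hψ.1
      rwa [Real.cos_zero] at this
    have h2 : -1 < Real.cos ψ := by
      have := Real.strictAntiOn_cos hmemψ hmemπ hψ.2
      rwa [Real.cos_pi] at this
    have hx : Real.cos ψ = x₀ := by
      apply huniq
      refine ⟨⟨h2, h1⟩, ?_⟩
      rw [← hcos ψ]; linarith
    rw [← hx, Real.arccos_cos hψ.1.le hψ.2.le]
end
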